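/- arXiv:2006.00558 — 7 statements merged into one kernel-verified Lean document; each statement's English description precedes it below -/
import Mathlib

section
/- For any Frank-Wolfe-type method applied to minimizing f(x) = (1/2)‖x‖² over the down-closed unit simplex S↓_d, initialized at a standard basis vector: if at the current iterate x_t the number of nonzero entries of x_t is strictly less than d, then there exists a standard basis vector e_j with x_t(j) = 0 that minimizes v ↦ vᵀ∇f(x_t) over the vertex set of S↓_d. Consequently, for the adversarial oracle choice, all iterates x₁,…,x_d lie in conv{e₁,…,e_d}, so f(x_t) − f* ≥ 1/(2d) for all t ≤ d. -/
open scoped RealInnerProductSpace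

/-!
If `x ≥ 0` has a zero coordinate `j`, then `⟪e_j, x⟫ = 0`, while every vertex `v` of the
down-closed simplex has `⟪v, x⟫ ≥ 0`. A point of `conv{e₁, …, e_d}` has coordinate sum `1`,
so Cauchy–Schwarz gives `1 ≤ d ‖x‖²`.
-/

open Set

namespace EuclideanSpace

variable {ι : Type*} [Fintype ι] [DecidableEq ι]

theorem inner_single_le_inner_of_nonneg {x v : EuclideanSpace ℝ ι} (hx : ∀ i, 0 ≤ x i)
    {j : ι} (hj : x j = 0) (hv : v ∈ insert 0 (range fun i : ι => single i (1 : ℝ))) :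
    ⟪single j (1 : ℝ), x⟫ ≤ ⟪v, x⟫ := by
  rcases hv with rfl | ⟨i, rfl⟩
  · simp [inner_single_left, hj]
  · simp [inner_single_left, hj, hx i]

theorem ofLp_mem_stdSimplex_of_mem_convexHull_single {x : EuclideanSpace ℝ ι}
    (hx : x ∈ convexHull ℝ (range fun i : ι => single i (1 : ℝ))) :
    WithLp.ofLp x ∈ stdSimplex ℝ ι := by
  have h := (WithLp.linearEquiv 2 ℝ (ι → ℝ)).toLinearMap.image_convexHull
    (range fun i : ι => single i (1 : ℝ))
  rw [← range_comp] at h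
  have hcomp : (WithLp.linearEquiv 2 ℝ (ι → ℝ)).toLinearMap ∘ (fun i : ι => single i (1 : ℝ))
      = fun i => Pi.single i 1 := by
    ext i : 1
    simp
  rw [hcomp, convexHull_rangle_single_eq_stdSimplex] at h
  exact h ▸ mem_image_of_mem _ hx

theorem inv_card_le_norm_sq_of_mem_convexHull_single {x : EuclideanSpace ℝ ι}
    (hx : x ∈ convexHull ℝ (range fun i : ι => single i (1 : ℝ))) :
    (Fintype.card ι : ℝ)⁻¹ ≤ ‖x‖ ^ 2 := by
  obtain ⟨-, hsum⟩ := ofLp_mem_stdSimplex_of_mem_convexHull_single hx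
  have : Nonempty ι := by
    by_contra h
    simp [not_nonempty_iff.mp h] at hsum
  rw [inv_le_iff_one_le_mul₀' (by positivity), real_norm_sq_eq]
  simpa [hsum] using sq_sum_le_card_mul_sum_sq (s := Finset.univ) (f := fun i => x i)

end EuclideanSpace

/-- For `f x = ½‖x‖²` over the down-closed unit simplex (whose
vertex set is `{0, e₁, …, e_d}`, and `∇f(x) = x`): if the current iterate
`x` (which is nonnegative) has fewer than `d` nonzero entries, then there is a
standard basis vector `e_j` with `x j = 0` minimizing `v ↦ ⟪v, ∇f(x)⟫` over the
vertex set.  Consequently every point in `conv{e₁,…,e_d}` has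
`f x − f* ≥ 1/(2d)` (with `f* = 0`). -/
theorem stmt2 (d : ℕ)
    (V : Set (EuclideanSpace ℝ (Fin d)))
    (hV : V = insert (0 : EuclideanSpace ℝ (Fin d))
      (Set.range fun i : Fin d => EuclideanSpace.single i (1 : ℝ)))
    (f : EuclideanSpace ℝ (Fin d) → ℝ)
    (hf : ∀ x, f x = (1 / 2) * ‖x‖ ^ 2) :
    (∀ x : EuclideanSpace ℝ (Fin d), (∀ i, 0 ≤ x i) →
      {i | x i ≠ 0} ≠ Set.univ →
      ∃ j : Fin d, x j = 0 ∧
        EuclideanSpace.single j (1 : ℝ) ∈ V ∧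
        ∀ v ∈ V, ⟪EuclideanSpace.single j (1 : ℝ), x⟫ ≤ ⟪v, x⟫) ∧
    (∀ x ∈ convexHull ℝ
        (Set.range fun i : Fin d => EuclideanSpace.single i (1 : ℝ)),
      1 / (2 * (d : ℝ)) ≤ f x - 0) := by
  subst hV
  refine ⟨fun x hx hsupp => ?_, fun x hx => ?_⟩
  · obtain ⟨j, hj⟩ : ∃ j, x j = 0 := by
      by_contra! h
      exact hsupp (eq_univ_of_forall h)
    exact ⟨j, hj, mem_insert_of_mem _ (mem_range_self j),
      fun v hv => EuclideanSpace.inner_single_le_inner_of_nonneg hx hj hv⟩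
  · have hnorm := EuclideanSpace.inv_card_le_norm_sq_of_mem_convexHull_single hx
    rw [Fintype.card_fin] at hnorm
    rw [hf, sub_zero, one_div, mul_inv]
    linarith
end

section
/- Let f, f̃ : ℝ^d → ℝ be convex and differentiable, let P be a convex compact set, let x̃* minimize f̃ over P and let x* minimize f over P. Suppose f has the quadratic growth property with parameter α > 0 over P (i.e., dist(x, X*)² ≤ (2/α)(f(x) − f*) for all x ∈ P, where X* is the set of minimizers of f) and ‖∇f(x) − ∇f̃(x)‖ ≤ ν for all x ∈ P. Then, letting x* be the point of X* closest to x̃*, it holds that ‖x̃* − x*‖ ≤ 2ν/α. -/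
/-!
Let `D = ‖x̃* − x*‖ = dist(x̃*, X*)`. Convexity of `f` gives `f(x̃*) − f* ≤ ⟪∇f(x̃*), x̃* − x*⟫`,
and optimality of `x̃*` for `f̃` gives `⟪∇f̃(x̃*), x̃* − x*⟫ ≤ 0`; hence, by Cauchy–Schwarz,
`f(x̃*) − f* ≤ ν D`. Quadratic growth then yields `D² ≤ (2/α) ν D`, i.e. `D ≤ 2ν/α`.
-/

open scoped RealInnerProductSpace

theorem Metric.infDist_eq_dist_of_forall_dist_le {α : Type*} [PseudoMetricSpace α] {x y : α}
    {s : Set α} (hy : y ∈ s) (h : ∀ z ∈ s, dist x y ≤ dist x z) : Metric.infDist x s = dist x y := by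
  have : Nonempty s := ⟨⟨y, hy⟩⟩
  exact le_antisymm (Metric.infDist_le_dist_of_mem hy)
    (Metric.infDist_eq_iInf (x := x) ▸ le_ciInf fun z => h z z.2)

section

variable {E : Type*} [NormedAddCommGroup E] [InnerProductSpace ℝ E] [CompleteSpace E]
  {P : Set E} {f : E → ℝ} {v x y : E}

theorem IsMinOn.inner_gradient_sub_nonneg (hP : Convex ℝ P) (hmin : IsMinOn f P x)
    (hx : x ∈ P) (hy : y ∈ P) (hf : HasGradientAt f v x) : 0 ≤ ⟪v, y - x⟫ := by
  simpa using hmin.localize.hasFDerivWithinAt_nonneg hf.hasFDerivAt.hasFDerivWithinAt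
    (sub_mem_posTangentConeAt_of_segment_subset (hP.segment_subset hx hy))

theorem ConvexOn.inner_gradient_sub_le (hconv : ConvexOn ℝ P f) (hx : x ∈ P) (hy : y ∈ P)
    (hf : HasGradientAt f v x) : ⟪v, y - x⟫ ≤ f y - f x := by
  set ℓ : ℝ →ᵃ[ℝ] E := AffineMap.lineMap x y
  have hline : ConvexOn ℝ (ℓ ⁻¹' P) (f ∘ ℓ) := hconv.comp_affineMap ℓ
  have hderiv : HasDerivAt (f ∘ ℓ) ⟪v, y - x⟫ 0 := by
    have hf' : HasFDerivAt f (InnerProductSpace.toDual ℝ E v) (ℓ 0) := by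
      simpa [ℓ] using hf.hasFDerivAt
    simpa using hf'.comp_hasDerivAt 0 AffineMap.hasDerivAt_lineMap
  simpa [slope_def_field, ℓ] using
    hline.le_slope_of_hasDerivAt (x := 0) (y := 1) (by simpa [ℓ]) (by simpa [ℓ]) one_pos hderiv

theorem ConvexOn.le_add_mul_norm_of_isMinOn {g : E → ℝ} {w : E} {ν : ℝ} (hP : Convex ℝ P)
    (hconv : ConvexOn ℝ P f) (hmin : IsMinOn g P x) (hx : x ∈ P) (hy : y ∈ P)
    (hf : HasGradientAt f v x) (hg : HasGradientAt g w x) (hvw : ‖v - w‖ ≤ ν) :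
    f x ≤ f y + ν * ‖x - y‖ := by
  have hf_lin := hconv.inner_gradient_sub_le hx hy hf
  have hg_opt := hmin.inner_gradient_sub_nonneg hP hx hy hg
  have hcs : ⟪v - w, x - y⟫ ≤ ν * ‖x - y‖ :=
    (real_inner_le_norm _ _).trans (mul_le_mul_of_nonneg_right hvw (norm_nonneg _))
  have hsplit : ⟪v - w, x - y⟫ = ⟪w, y - x⟫ - ⟪v, y - x⟫ := by
    rw [← neg_sub y x, inner_neg_right, inner_sub_left]
    ring
  linarith

end

theorem stmt3_general {d : ℕ}
    (P : Set (EuclideanSpace ℝ (Fin d)))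
    (hPconv : Convex ℝ P)
    (f ftil : EuclideanSpace ℝ (Fin d) → ℝ)
    (gf gftil : EuclideanSpace ℝ (Fin d) → EuclideanSpace ℝ (Fin d))
    (hf : ∀ x, HasGradientAt f (gf x) x)
    (hftil : ∀ x, HasGradientAt ftil (gftil x) x)
    (hfconv : ConvexOn ℝ P f)
    (α ν : ℝ) (hα : 0 < α)
    (Xs : Set (EuclideanSpace ℝ (Fin d)))
    (hXs : Xs = {y ∈ P | ∀ z ∈ P, f y ≤ f z})
    (fstar : ℝ) (hfstar : ∀ y ∈ Xs, f y = fstar)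
    (hQG : ∀ x ∈ P, (Metric.infDist x Xs) ^ 2 ≤ (2 / α) * (f x - fstar))
    (hgrad : ∀ x ∈ P, ‖gf x - gftil x‖ ≤ ν)
    (xtil : EuclideanSpace ℝ (Fin d))
    (hxtil : xtil ∈ P ∧ ∀ y ∈ P, ftil xtil ≤ ftil y)
    (xs : EuclideanSpace ℝ (Fin d))
    (hxs : xs ∈ Xs ∧ ∀ y ∈ Xs, ‖xtil - xs‖ ≤ ‖xtil - y‖) :
    ‖xtil - xs‖ ≤ 2 * ν / α := by
  have hxsP : xs ∈ P := (hXs ▸ hxs.1).1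
  have hdist : Metric.infDist xtil Xs = ‖xtil - xs‖ := by
    simpa only [dist_eq_norm] using
      Metric.infDist_eq_dist_of_forall_dist_le hxs.1 (by simpa only [dist_eq_norm] using hxs.2)
  have hsubopt : f xtil ≤ fstar + ν * ‖xtil - xs‖ := hfstar xs hxs.1 ▸
    hfconv.le_add_mul_norm_of_isMinOn hPconv (isMinOn_iff.2 hxtil.2) hxtil.1 hxsP
      (hf xtil) (hftil xtil) (hgrad xtil hxtil.1)
  have hgrowth : ‖xtil - xs‖ ^ 2 ≤ 2 / α * (ν * ‖xtil - xs‖) := calc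
    ‖xtil - xs‖ ^ 2 = Metric.infDist xtil Xs ^ 2 := by rw [hdist]
    _ ≤ 2 / α * (f xtil - fstar) := hQG xtil hxtil.1
    _ ≤ 2 / α * (ν * ‖xtil - xs‖) := by gcongr; linarith
  have hν' : 0 ≤ ν := (norm_nonneg _).trans (hgrad xtil hxtil.1)
  rw [le_div_iff₀ hα]
  rw [div_mul_eq_mul_div, le_div_iff₀ hα] at hgrowth
  nlinarith [norm_nonneg (xtil - xs)]

/-- If `f, f̃` are convex and differentiable, `x̃*` minimizes `f̃`
over a convex compact `P`, `f` has quadratic growth with parameter `α > 0`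
over `P`, and `‖∇f(x) − ∇f̃(x)‖ ≤ ν` on `P`, then the point `x*` of the set
`X*` of minimizers of `f` closest to `x̃*` satisfies `‖x̃* − x*‖ ≤ 2ν/α`. -/
theorem stmt3 {d : ℕ}
    (P : Set (EuclideanSpace ℝ (Fin d)))
    (hPconv : Convex ℝ P) (hPcomp : IsCompact P)
    (f ftil : EuclideanSpace ℝ (Fin d) → ℝ)
    (gf gftil : EuclideanSpace ℝ (Fin d) → EuclideanSpace ℝ (Fin d))
    (hf : ∀ x, HasGradientAt f (gf x) x)
    (hftil : ∀ x, HasGradientAt ftil (gftil x) x)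
    (hfconv : ConvexOn ℝ P f) (hftilconv : ConvexOn ℝ P ftil)
    (α ν : ℝ) (hα : 0 < α) (hν : 0 ≤ ν)
    (Xs : Set (EuclideanSpace ℝ (Fin d)))
    (hXs : Xs = {y ∈ P | ∀ z ∈ P, f y ≤ f z})
    (fstar : ℝ) (hfstar : ∀ y ∈ Xs, f y = fstar)
    (hQG : ∀ x ∈ P, (Metric.infDist x Xs) ^ 2 ≤ (2 / α) * (f x - fstar))
    (hgrad : ∀ x ∈ P, ‖gf x - gftil x‖ ≤ ν)
    (xtil : EuclideanSpace ℝ (Fin d))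
    (hxtil : xtil ∈ P ∧ ∀ y ∈ P, ftil xtil ≤ ftil y)
    (xs : EuclideanSpace ℝ (Fin d))
    (hxs : xs ∈ Xs ∧ ∀ y ∈ Xs, ‖xtil - xs‖ ≤ ‖xtil - y‖) :
    ‖xtil - xs‖ ≤ 2 * ν / α :=
  stmt3_general P hPconv f ftil gf gftil hf hftil hfconv α ν hα Xs hXs fstar hfstar hQG hgrad xtil
    hxtil xs hxs
end

section
/- Let f be β-smooth and convex on a convex compact polytope P with vertex set V, and suppose the unique minimizer x* of f is a vertex with strict complementarity parameter δ > 0 (i.e., (v − x*)ᵀ∇f(x*) ≥ δ for all vertices v ≠ x*). If the standard Frank-Wolfe method with exact line-search attains f(x_T) − f* < δ at some iteration T, then x_T is not in the convex hull of V \ {x*}; combined with the O(βD²/t) convergence rate of Frank-Wolfe, the method reaches an iterate equal to x* (as a convex combination forced to put positive weight on x*) within O(βD²/δ) iterations. -/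
/-!
Convexity gives `f y - f x* ≥ ⟪∇f(x*), y - x*⟫`, and strict complementarity makes the right-hand
side at least `δ` at every vertex other than `x*`, hence on their convex hull. So no point with
optimality gap below `δ` lies in that hull, and the rate bound produces such iterates as soon as
`CβD²/t < δ`.
-/

open scoped RealInnerProductSpace

section

variable {E : Type*} [NormedAddCommGroup E]

theorem ConvexOn.fderiv_sub_le_sub [NormedSpace ℝ E] {s : Set E} {f : E → ℝ}
    {f' : E →L[ℝ] ℝ} {x y : E} (hfc : ConvexOn ℝ s f) (hx : x ∈ s) (hy : y ∈ s)
    (hf : HasFDerivAt f f' x) :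
    f' (y - x) ≤ f y - f x := by
  let L : ℝ →ᵃ[ℝ] E := AffineMap.lineMap x y
  have hφ : ConvexOn ℝ (L ⁻¹' s) (f ∘ L) := hfc.comp_affineMap L
  have hL : HasDerivAt L (y - x) 0 := AffineMap.hasDerivAt_lineMap
  have hφ' : HasDerivAt (f ∘ L) (f' (y - x)) 0 :=
    HasFDerivAt.comp_hasDerivAt (x := 0) (by simpa [L] using hf) hL
  simpa [L, slope_def_field] using
    hφ.le_slope_of_hasDerivAt (x := 0) (y := 1) (by simpa [L]) (by simpa [L]) one_pos hφ'

theorem ConvexOn.inner_sub_le_sub [InnerProductSpace ℝ E] [CompleteSpace E] {s : Set E}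
    {f : E → ℝ} {g x y : E} (hfc : ConvexOn ℝ s f) (hx : x ∈ s) (hy : y ∈ s)
    (hf : HasGradientAt f g x) :
    ⟪g, y - x⟫ ≤ f y - f x := by
  simpa using hfc.fderiv_sub_le_sub hx hy hf.hasFDerivAt

theorem le_inner_sub_of_mem_convexHull [InnerProductSpace ℝ E] {s : Set E} {a b y : E} {δ : ℝ}
    (hs : ∀ v ∈ s, δ ≤ ⟪a, v - b⟫) (hy : y ∈ convexHull ℝ s) :
    δ ≤ ⟪a, y - b⟫ := by
  have hconv : Convex ℝ {w : E | δ ≤ ⟪a, w - b⟫} := by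
    simpa only [innerₛₗ_apply_apply, inner_sub_right, le_sub_iff_add_le] using
      convex_halfSpace_ge (innerₛₗ ℝ a).isLinear (δ + ⟪a, b⟫)
  exact convexHull_min hs hconv hy

theorem le_sub_of_mem_convexHull_diff_singleton [InnerProductSpace ℝ E] [CompleteSpace E]
    {V : Set E} {f : E → ℝ} {g xs y : E} {δ : ℝ}
    (hxsV : xs ∈ V) (hfc : ConvexOn ℝ (convexHull ℝ V) f) (hf : HasGradientAt f g xs)
    (hstrict : ∀ v ∈ V, v ≠ xs → δ ≤ ⟪g, v - xs⟫) (hy : y ∈ convexHull ℝ (V \ {xs})) :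
    δ ≤ f y - f xs := calc
  δ ≤ ⟪g, y - xs⟫ := le_inner_sub_of_mem_convexHull (fun v hv ↦ hstrict v hv.1 hv.2) hy
  _ ≤ f y - f xs := hfc.inner_sub_le_sub (subset_convexHull ℝ V hxsV)
      (convexHull_mono Set.sdiff_subset hy) hf

end

theorem stmt6_general {d : ℕ}
    (V : Set (EuclideanSpace ℝ (Fin d)))
    (P : Set (EuclideanSpace ℝ (Fin d))) (hP : P = convexHull ℝ V)
    (f : EuclideanSpace ℝ (Fin d) → ℝ)
    (g : EuclideanSpace ℝ (Fin d) → EuclideanSpace ℝ (Fin d))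
    (hf : ∀ x, HasGradientAt f (g x) x)
    (hfconv : ConvexOn ℝ P f)
    (β D : ℝ)
    (xs : EuclideanSpace ℝ (Fin d)) (hxsV : xs ∈ V)
    (δ : ℝ)
    (hstrict : ∀ v ∈ V, v ≠ xs → δ ≤ ⟪g xs, v - xs⟫)
    (x : ℕ → EuclideanSpace ℝ (Fin d))
    (C : ℝ)
    (hrate : ∀ t : ℕ, 1 ≤ t → f (x t) - f xs ≤ C * β * D ^ 2 / t) :
    (∀ y ∈ P, f y - f xs < δ → y ∉ convexHull ℝ (V \ {xs})) ∧
      (∀ t : ℕ, 1 ≤ t → C * β * D ^ 2 / t < δ →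
        x t ∉ convexHull ℝ (V \ {xs})) := by
  subst hP
  have gap (y) (hy : y ∈ convexHull ℝ (V \ {xs})) : δ ≤ f y - f xs :=
    le_sub_of_mem_convexHull_diff_singleton hxsV hfconv (hf xs) hstrict hy
  refine ⟨fun y _ hlt hy ↦ (gap y hy).not_gt hlt, fun t ht hlt hxt ↦ ?_⟩
  linarith [gap (x t) hxt, hrate t ht]

/-- For `f` `β`-smooth and convex on a polytope `P = conv(V)` of
diameter `D`, whose unique minimizer `x*` is a vertex with strict
complementarity parameter `δ > 0`: any point (in particular any Frank-Wolfe
iterate) `x ∈ P` with `f x − f* < δ` is not in `conv(V \ {x*})`; combined with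
a Frank-Wolfe convergence rate `f(x_t) − f* ≤ CβD²/t`, every iterate `x_t`
with `t ≥ 1` and `CβD²/t < δ` (i.e. after `O(βD²/δ)` iterations) lies outside
`conv(V \ {x*})`, hence its convex decomposition puts positive weight on `x*`. -/
theorem stmt6 {d : ℕ}
    (V : Set (EuclideanSpace ℝ (Fin d))) (hVfin : V.Finite)
    (P : Set (EuclideanSpace ℝ (Fin d))) (hP : P = convexHull ℝ V)
    (f : EuclideanSpace ℝ (Fin d) → ℝ)
    (g : EuclideanSpace ℝ (Fin d) → EuclideanSpace ℝ (Fin d))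
    (hf : ∀ x, HasGradientAt f (g x) x)
    (hfconv : ConvexOn ℝ P f)
    (β D : ℝ) (hβ : 0 < β) (hD : 0 < D)
    (hsmooth : ∀ x y, ‖g x - g y‖ ≤ β * ‖x - y‖)
    (hdiam : ∀ x ∈ P, ∀ y ∈ P, ‖x - y‖ ≤ D)
    (xs : EuclideanSpace ℝ (Fin d)) (hxsV : xs ∈ V)
    (hxsmin : ∀ y ∈ P, f xs ≤ f y)
    (hxsunique : ∀ y ∈ P, (∀ z ∈ P, f y ≤ f z) → y = xs)
    (δ : ℝ) (hδ : 0 < δ)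
    (hstrict : ∀ v ∈ V, v ≠ xs → δ ≤ ⟪g xs, v - xs⟫)
    (x : ℕ → EuclideanSpace ℝ (Fin d)) (hxP : ∀ t, x t ∈ P)
    (C : ℝ) (hC : 0 < C)
    (hrate : ∀ t : ℕ, 1 ≤ t → f (x t) - f xs ≤ C * β * D ^ 2 / t) :
    (∀ y ∈ P, f y - f xs < δ → y ∉ convexHull ℝ (V \ {xs})) ∧
      (∀ t : ℕ, 1 ≤ t → C * β * D ^ 2 / t < δ →
        x t ∉ convexHull ℝ (V \ {xs})) :=
  stmt6_general V P hP f g hf hfconv β D xs hxsV δ hstrict x C hrate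
end

section
/- Let f be convex and differentiable on a polytope P, let x ∈ P have convex decomposition x = ∑ᵢ λᵢvᵢ over vertices vᵢ with λᵢ > 0, and let x* be a minimizer of f over P. Write S₂ for the set of indices i with vᵢ ∉ F*, where F* is the optimal face. Under strict complementarity with parameter δ > 0 (i.e., (v − x*)ᵀ∇f(x*) ≥ δ for vertices v ∉ F* and = 0 for v ∈ F* ), it holds that ∑_{i∈S₂} λᵢ ≤ (f(x) − f*)/δ. -/
open scoped RealInnerProductSpace Classical

/-!
Convexity of `f` on `P` gives the first-order bound `⟪∇f(x*), x - x*⟫ ≤ f x - f x*`. Expanding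
`x - x* = ∑ᵢ λᵢ (vᵢ - x*)`, the left side is `∑ᵢ λᵢ ⟪∇f(x*), vᵢ - x*⟫`, and strict complementarity
bounds each summand below by `δ λᵢ` when `vᵢ ∉ F*` and by `0` otherwise.
-/

theorem ConvexOn.le_sub_of_hasFDerivAt {E : Type*} [NormedAddCommGroup E] [NormedSpace ℝ E]
    {s : Set E} {f : E → ℝ} {f' : E →L[ℝ] ℝ} {a b : E} (hf : ConvexOn ℝ s f) (ha : a ∈ s)
    (hb : b ∈ s) (hfa : HasFDerivAt f f' a) : f' (b - a) ≤ f b - f a := by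
  let ℓ : ℝ →ᵃ[ℝ] E := AffineMap.lineMap a b
  have hline : ConvexOn ℝ (Set.Icc 0 1) (f ∘ ℓ) :=
    (hf.comp_affineMap ℓ).subset (fun _ ht ↦ hf.1.lineMap_mem ha hb ht) (convex_Icc 0 1)
  have hderiv : HasDerivAt (f ∘ ℓ) (f' (b - a)) 0 := by
    have hfa' : HasFDerivAt f f' (ℓ 0) := by simpa [ℓ] using hfa
    exact hfa'.comp_hasDerivAt 0 AffineMap.hasDerivAt_lineMap
  simpa [slope, ℓ] using hline.le_slope_of_hasDerivAt (Set.left_mem_Icc.2 zero_le_one)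
    (Set.right_mem_Icc.2 zero_le_one) zero_lt_one hderiv

theorem ConvexOn.inner_le_sub_of_hasGradientAt {F : Type*} [NormedAddCommGroup F]
    [InnerProductSpace ℝ F] [CompleteSpace F] {s : Set F} {f : F → ℝ} {g : F} {a b : F}
    (hf : ConvexOn ℝ s f) (ha : a ∈ s) (hb : b ∈ s) (hfa : HasGradientAt f g a) :
    ⟪g, b - a⟫ ≤ f b - f a :=
  hf.le_sub_of_hasFDerivAt ha hb hfa.hasFDerivAt

theorem Finset.sum_smul_sub_eq_sum_smul_sub {ι R M : Type*} [Ring R] [AddCommGroup M] [Module R M]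
    {s : Finset ι} {w : ι → R} (hw : ∑ i ∈ s, w i = 1) (v : ι → M) (y : M) :
    ∑ i ∈ s, w i • v i - y = ∑ i ∈ s, w i • (v i - y) := by
  simp only [smul_sub, Finset.sum_sub_distrib, ← Finset.sum_smul, hw, one_smul]

theorem mul_sum_indicator_le_sum_mul {ι : Type*} {s : Finset ι} {S : Set ι} {w c : ι → ℝ}
    {δ : ℝ} (hw : ∀ i ∈ s, 0 ≤ w i) (hS : ∀ i ∈ s, i ∈ S → δ ≤ c i)
    (hSc : ∀ i ∈ s, i ∉ S → 0 ≤ c i) :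
    δ * ∑ i ∈ s, S.indicator w i ≤ ∑ i ∈ s, w i * c i := by
  rw [Finset.mul_sum]
  refine Finset.sum_le_sum fun i hi ↦ ?_
  by_cases hiS : i ∈ S
  · rw [Set.indicator_of_mem hiS, mul_comm]
    exact mul_le_mul_of_nonneg_left (hS i hi hiS) (hw i hi)
  · rw [Set.indicator_of_notMem hiS, mul_zero]
    exact mul_nonneg (hw i hi) (hSc i hi hiS)

theorem stmt7_general {d n : ℕ}
    (V : Set (EuclideanSpace ℝ (Fin d)))
    (P : Set (EuclideanSpace ℝ (Fin d))) (hP : P = convexHull ℝ V)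
    (f : EuclideanSpace ℝ (Fin d) → ℝ)
    (g : EuclideanSpace ℝ (Fin d) → EuclideanSpace ℝ (Fin d))
    (hf : ∀ x, HasGradientAt f (g x) x)
    (hfconv : ConvexOn ℝ P f)
    (Fs : Set (EuclideanSpace ℝ (Fin d)))
    (xs : EuclideanSpace ℝ (Fin d)) (hxsP : xs ∈ P)
    (δ : ℝ) (hδ : 0 < δ)
    (hstrict : ∀ v ∈ V,
      (v ∉ Fs → δ ≤ ⟪g xs, v - xs⟫) ∧ (v ∈ Fs → ⟪g xs, v - xs⟫ = 0))
    (lam : Fin n → ℝ) (v : Fin n → EuclideanSpace ℝ (Fin d))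
    (hlampos : ∀ i, 0 < lam i) (hlamsum : ∑ i, lam i = 1)
    (hvV : ∀ i, v i ∈ V)
    (x : EuclideanSpace ℝ (Fin d)) (hx : x = ∑ i, lam i • v i) :
    ∑ i, Set.indicator {j : Fin n | v j ∉ Fs} lam i
      ≤ (f x - f xs) / δ := by
  have hxP : x ∈ P := hx ▸ hP ▸ (convex_convexHull ℝ V).sum_mem (fun i _ ↦ (hlampos i).le)
    hlamsum fun i _ ↦ subset_convexHull ℝ V (hvV i)
  have hmass : δ * ∑ i, Set.indicator {j : Fin n | v j ∉ Fs} lam i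
      ≤ ∑ i, lam i * ⟪g xs, v i - xs⟫ :=
    mul_sum_indicator_le_sum_mul (fun i _ ↦ (hlampos i).le)
      (fun i _ hi ↦ (hstrict (v i) (hvV i)).1 hi)
      (fun i _ hi ↦ ((hstrict (v i) (hvV i)).2 (not_not.1 hi)).ge)
  rw [le_div_iff₀ hδ, mul_comm]
  calc δ * ∑ i, Set.indicator {j : Fin n | v j ∉ Fs} lam i
      ≤ ∑ i, lam i * ⟪g xs, v i - xs⟫ := hmass
    _ = ⟪g xs, x - xs⟫ := by
      rw [hx, Finset.sum_smul_sub_eq_sum_smul_sub hlamsum, inner_sum]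
      simp only [real_inner_smul_right]
    _ ≤ f x - f xs := hfconv.inner_le_sub_of_hasGradientAt hxsP hxP (hf xs)

/-- For `x = ∑ᵢ λᵢ vᵢ` a convex decomposition over vertices with
`λᵢ > 0`, a minimizer `x*` of a convex differentiable `f` over `P`, and the
optimal face `F*`, strict complementarity with parameter `δ > 0` implies that
the total mass on vertices outside `F*` satisfies
`∑_{i : vᵢ ∉ F*} λᵢ ≤ (f x − f*)/δ`. -/
theorem stmt7 {d n : ℕ}
    (V : Set (EuclideanSpace ℝ (Fin d))) (hVfin : V.Finite)
    (P : Set (EuclideanSpace ℝ (Fin d))) (hP : P = convexHull ℝ V)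
    (f : EuclideanSpace ℝ (Fin d) → ℝ)
    (g : EuclideanSpace ℝ (Fin d) → EuclideanSpace ℝ (Fin d))
    (hf : ∀ x, HasGradientAt f (g x) x)
    (hfconv : ConvexOn ℝ P f)
    (Fs : Set (EuclideanSpace ℝ (Fin d)))
    (xs : EuclideanSpace ℝ (Fin d)) (hxsP : xs ∈ P) (hxsFs : xs ∈ Fs)
    (hxsmin : ∀ y ∈ P, f xs ≤ f y)
    (δ : ℝ) (hδ : 0 < δ)
    (hstrict : ∀ v ∈ V,
      (v ∉ Fs → δ ≤ ⟪g xs, v - xs⟫) ∧ (v ∈ Fs → ⟪g xs, v - xs⟫ = 0))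
    (lam : Fin n → ℝ) (v : Fin n → EuclideanSpace ℝ (Fin d))
    (hlampos : ∀ i, 0 < lam i) (hlamsum : ∑ i, lam i = 1)
    (hvV : ∀ i, v i ∈ V)
    (x : EuclideanSpace ℝ (Fin d)) (hx : x = ∑ i, lam i • v i) :
    ∑ i, Set.indicator {j : Fin n | v j ∉ Fs} lam i
      ≤ (f x - f xs) / δ :=
  stmt7_general V P hP f g hf hfconv Fs xs hxsP δ hδ hstrict lam v hlampos hlamsum hvV x hx
end

section
/- Suppose a sequence (h_t) of nonnegative reals satisfies: h_{t+1} ≤ h_t for all t, and h_{t+1} ≤ (1 − γ) h_t whenever iteration t is not a 'drop step', where γ ∈ (0,1); and among iterations T₀, T₀+1, …, t−1 at most (k + (t − T₀))/2 are drop steps, where k ≤ T₀. Then for all t ≥ 2T₀: h_t ≤ h_{T₀} (1 − γ)^{(t − 2T₀)/2} ≤ h_{T₀} exp(−γ(t − 2T₀)/2). -/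
/-!
On a non-drop step `h` contracts by `1 - γ` and on a drop step it does not increase, so from `T₀`
to `t` it contracts by `(1 - γ) ^ N`, with `N` the number of non-drop steps in between. The drop
steps number at most `(k + (t - T₀)) / 2 ≤ (T₀ + (t - T₀)) / 2`, hence `N ≥ (t - 2 T₀) / 2`.
Finally `1 - γ ≤ exp (-γ)`.
-/

open scoped Classical

theorem le_mul_pow_card_filter_notMem {α : Type*} [CommSemiring α] [PartialOrder α]
    [IsOrderedRing α] (h : ℕ → α) {c : α} (hc : 0 ≤ c) (drop : Set ℕ)
    (hmono : ∀ t, h (t + 1) ≤ h t) (hcontract : ∀ t, t ∉ drop → h (t + 1) ≤ c * h t)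
    {T₀ t : ℕ} (ht : T₀ ≤ t) :
    h t ≤ h T₀ * c ^ ((Finset.Ico T₀ t).filter (fun s => s ∉ drop)).card := by
  induction t, ht using Nat.le_induction with
  | base => simp
  | succ n hn ih =>
    rw [← Finset.insert_Ico_right_eq_Ico_add_one hn, Finset.filter_insert]
    by_cases hd : n ∈ drop
    · simpa [hd] using (hmono n).trans ih
    · rw [if_pos hd, Finset.card_insert_of_notMem (by simp), pow_succ', mul_left_comm]
      exact (hcontract n hd).trans (mul_le_mul_of_nonneg_left ih hc)

theorem sub_two_mul_div_two_le_card_filter_notMem (drop : Set ℕ) {T₀ k t : ℕ}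
    (hk : k ≤ T₀) (ht : T₀ ≤ t)
    (hcount : (((Finset.Ico T₀ t).filter (fun s => s ∈ drop)).card : ℝ)
      ≤ ((k : ℝ) + ((t : ℝ) - (T₀ : ℝ))) / 2) :
    ((t : ℝ) - 2 * (T₀ : ℝ)) / 2 ≤ ((Finset.Ico T₀ t).filter (fun s => s ∉ drop)).card := by
  have hsplit := Finset.card_filter_add_card_filter_not (s := Finset.Ico T₀ t) (· ∈ drop)
  rw [Nat.card_Ico] at hsplit
  have hsplit' : (((Finset.Ico T₀ t).filter (fun s => s ∈ drop)).card : ℝ)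
      + ((Finset.Ico T₀ t).filter (fun s => s ∉ drop)).card = (t : ℝ) - T₀ := by
    rw [← Nat.cast_sub ht, ← hsplit, Nat.cast_add]
  have hk' : (k : ℝ) ≤ T₀ := by exact_mod_cast hk
  linarith

theorem Real.one_sub_rpow_le_exp_neg_mul {γ x : ℝ} (hγ1 : γ ≤ 1) (hx : 0 ≤ x) :
    (1 - γ) ^ x ≤ Real.exp (-γ * x) := by
  rw [Real.exp_mul]
  exact Real.rpow_le_rpow (by linarith) (Real.one_sub_le_exp_neg γ) hx

/-- Drop-step counting. If a nonnegative nonincreasing sequence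
`(h_t)` contracts by `(1 − γ)` on every non-drop step, and among iterations
`T₀, …, t−1` at most `(k + (t − T₀))/2` are drop steps with `k ≤ T₀`, then for
all `t ≥ 2T₀`: `h_t ≤ h_{T₀}(1 − γ)^{(t−2T₀)/2} ≤ h_{T₀} exp(−γ(t−2T₀)/2)`. -/
theorem stmt11 (h : ℕ → ℝ) (hpos : ∀ t, 0 ≤ h t)
    (γ : ℝ) (hγ : 0 < γ) (hγ1 : γ < 1)
    (drop : Set ℕ)
    (hmono : ∀ t, h (t + 1) ≤ h t)
    (hcontract : ∀ t, t ∉ drop → h (t + 1) ≤ (1 - γ) * h t)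
    (T₀ k : ℕ) (hk : k ≤ T₀)
    (hcount : ∀ t, T₀ ≤ t →
      (((Finset.Ico T₀ t).filter (fun s => s ∈ drop)).card : ℝ)
        ≤ ((k : ℝ) + ((t : ℝ) - (T₀ : ℝ))) / 2) :
    ∀ t, 2 * T₀ ≤ t →
      h t ≤ h T₀ * (1 - γ) ^ (((t : ℝ) - 2 * (T₀ : ℝ)) / 2) ∧
      h t ≤ h T₀ * Real.exp (-γ * ((t : ℝ) - 2 * (T₀ : ℝ)) / 2) := by
  intro t ht
  have hT₀t : T₀ ≤ t := by omega
  have hexponent_nonneg : 0 ≤ ((t : ℝ) - 2 * (T₀ : ℝ)) / 2 := by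
    have : (2 * T₀ : ℝ) ≤ t := by exact_mod_cast ht
    linarith
  have hrate : h t ≤ h T₀ * (1 - γ) ^ (((t : ℝ) - 2 * (T₀ : ℝ)) / 2) :=
    calc h t ≤ h T₀ * (1 - γ) ^ ((Finset.Ico T₀ t).filter (fun s => s ∉ drop)).card :=
          le_mul_pow_card_filter_notMem h (by linarith) drop hmono hcontract hT₀t
      _ = h T₀ * (1 - γ) ^ (((Finset.Ico T₀ t).filter (fun s => s ∉ drop)).card : ℝ) := by
          rw [Real.rpow_natCast]
      _ ≤ h T₀ * (1 - γ) ^ (((t : ℝ) - 2 * (T₀ : ℝ)) / 2) :=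
          mul_le_mul_of_nonneg_left (Real.rpow_le_rpow_of_exponent_ge (by linarith) (by linarith)
            (sub_two_mul_div_two_le_card_filter_notMem drop hk hT₀t (hcount t hT₀t))) (hpos T₀)
  refine ⟨hrate, hrate.trans ?_⟩
  rw [mul_div_assoc]
  exact mul_le_mul_of_nonneg_left
    (Real.one_sub_rpow_le_exp_neg_mul hγ1.le hexponent_nonneg) (hpos T₀)
end

section
/- Let f be convex and differentiable on a polytope P, let x ∈ P with convex decomposition x = ∑_{i=1}^n λᵢvᵢ (λᵢ > 0, vertices vᵢ), let u ∈ argmin_{v ∈ V} vᵀ∇f(x) and z ∈ argmax_{i∈[n]} vᵢᵀ∇f(x). For any choice of Δᵢ ∈ [0, λᵢ] with total mass Δ = ∑ᵢ Δᵢ, the point p = ∑ᵢ(λᵢ − Δᵢ)vᵢ + Δu satisfies (p − x)ᵀ∇f(x) = ∑ᵢ Δᵢ(u − vᵢ)ᵀ∇f(x) ≥ Δ·(u − x)ᵀ∇f(x) + Δ·(x − z)ᵀ∇f(x). -/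
open scoped RealInnerProductSpace

theorem sum_sub_smul_add_sum_smul_sub_sum_smul {R M ι : Type*} [Ring R] [AddCommGroup M]
    [Module R M] (s : Finset ι) (lam δ : ι → R) (v : ι → M) (u : M) :
    (∑ i ∈ s, (lam i - δ i) • v i + (∑ i ∈ s, δ i) • u) - ∑ i ∈ s, lam i • v i =
      ∑ i ∈ s, δ i • (u - v i) := by
  simp only [smul_sub, sub_smul, Finset.sum_sub_distrib, Finset.sum_smul]
  abel

theorem sum_mul_inner_sub_le_of_inner_le {E ι : Type*} [NormedAddCommGroup E]
    [InnerProductSpace ℝ E] (s : Finset ι) (δ : ι → ℝ) (hδ : ∀ i ∈ s, 0 ≤ δ i)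
    (w u z : E) (v : ι → E) (hz : ∀ i ∈ s, ⟪w, v i⟫ ≤ ⟪w, z⟫) :
    (∑ i ∈ s, δ i) * ⟪w, u - z⟫ ≤ ∑ i ∈ s, δ i * ⟪w, u - v i⟫ := by
  rw [Finset.sum_mul]
  refine Finset.sum_le_sum fun i hi => mul_le_mul_of_nonneg_left ?_ (hδ i hi)
  rw [inner_sub_right, inner_sub_right]
  linarith [hz i hi]

theorem stmt13_general {d n : ℕ}
    (g : EuclideanSpace ℝ (Fin d) → EuclideanSpace ℝ (Fin d))
    (lam : Fin n → ℝ) (v : Fin n → EuclideanSpace ℝ (Fin d))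
    (x : EuclideanSpace ℝ (Fin d)) (hx : x = ∑ i, lam i • v i)
    (u : EuclideanSpace ℝ (Fin d))
    (z : EuclideanSpace ℝ (Fin d))
    (hzmax : ∀ i, ⟪g x, v i⟫ ≤ ⟪g x, z⟫)
    (Δi : Fin n → ℝ) (hΔi : ∀ i, Δi i ∈ Set.Icc 0 (lam i))
    (Δ : ℝ) (hΔ : Δ = ∑ i, Δi i)
    (p : EuclideanSpace ℝ (Fin d))
    (hp : p = (∑ i, (lam i - Δi i) • v i) + Δ • u) :
    ⟪g x, p - x⟫ = ∑ i, Δi i * ⟪g x, u - v i⟫ ∧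
      Δ * ⟪g x, u - x⟫ + Δ * ⟪g x, x - z⟫ ≤ ⟪g x, p - x⟫ := by
  have hpx : p - x = ∑ i, Δi i • (u - v i) := by
    rw [hp, hx, hΔ]
    exact sum_sub_smul_add_sum_smul_sub_sum_smul _ lam Δi v u
  have heq : ⟪g x, p - x⟫ = ∑ i, Δi i * ⟪g x, u - v i⟫ := by
    simp only [hpx, inner_sum, real_inner_smul_right]
  refine ⟨heq, ?_⟩
  calc Δ * ⟪g x, u - x⟫ + Δ * ⟪g x, x - z⟫ = Δ * ⟪g x, u - z⟫ := by
        rw [← mul_add, ← inner_add_right, sub_add_sub_cancel]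
    _ ≤ ⟪g x, p - x⟫ := by
        rw [heq, hΔ]
        exact sum_mul_inner_sub_le_of_inner_le _ Δi (fun i _ => (hΔi i).1) _ u z v
          (fun i _ => hzmax i)

/-- For `x = ∑ᵢ λᵢvᵢ` (λᵢ > 0, vertices vᵢ), `u` a linear
minimizer over `V` and `z = v_{i₀}` a maximizer of `⟪vᵢ, ∇f(x)⟫` over the
support, and any `Δᵢ ∈ [0, λᵢ]` with `Δ = ∑ᵢ Δᵢ`, the point
`p = ∑ᵢ(λᵢ − Δᵢ)vᵢ + Δu` satisfies
`⟪∇f(x), p − x⟫ = ∑ᵢ Δᵢ⟪∇f(x), u − vᵢ⟫ ≥ Δ⟪∇f(x), u − x⟫ + Δ⟪∇f(x), x − z⟫`. -/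
theorem stmt13 {d n : ℕ}
    (V : Set (EuclideanSpace ℝ (Fin d))) (hVfin : V.Finite)
    (f : EuclideanSpace ℝ (Fin d) → ℝ)
    (g : EuclideanSpace ℝ (Fin d) → EuclideanSpace ℝ (Fin d))
    (hf : ∀ x, HasGradientAt f (g x) x)
    (lam : Fin n → ℝ) (v : Fin n → EuclideanSpace ℝ (Fin d))
    (hlampos : ∀ i, 0 < lam i) (hlamsum : ∑ i, lam i = 1)
    (hvV : ∀ i, v i ∈ V)
    (x : EuclideanSpace ℝ (Fin d)) (hx : x = ∑ i, lam i • v i)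
    (u : EuclideanSpace ℝ (Fin d)) (huV : u ∈ V)
    (hu : ∀ w ∈ V, ⟪g x, u⟫ ≤ ⟪g x, w⟫)
    (i₀ : Fin n) (z : EuclideanSpace ℝ (Fin d)) (hz : z = v i₀)
    (hzmax : ∀ i, ⟪g x, v i⟫ ≤ ⟪g x, z⟫)
    (Δi : Fin n → ℝ) (hΔi : ∀ i, Δi i ∈ Set.Icc 0 (lam i))
    (Δ : ℝ) (hΔ : Δ = ∑ i, Δi i)
    (p : EuclideanSpace ℝ (Fin d))
    (hp : p = (∑ i, (lam i - Δi i) • v i) + Δ • u) :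
    ⟪g x, p - x⟫ = ∑ i, Δi i * ⟪g x, u - v i⟫ ∧
      Δ * ⟪g x, u - x⟫ + Δ * ⟪g x, x - z⟫ ≤ ⟪g x, p - x⟫ :=
  stmt13_general g lam v x hx u z hzmax Δi hΔi Δ hΔ p hp
end

section
/- Let g : ℝ^m → ℝ be α_g-strongly convex, A ∈ ℝ^{m×d}, b ∈ ℝ^d, and define f(x) = g(Ax) + bᵀx on a convex compact polytope P ⊆ ℝ^d. Then the set of minimizers X* of f over P satisfies: Ax is constant on X* and bᵀx is constant on X* (i.e., any two minimizers x₁*, x₂* satisfy Ax₁* = Ax₂* and bᵀx₁* = bᵀx₂*). -/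
open scoped RealInnerProductSpace

/-! At the midpoint `z` of two minimizers, strong convexity of `g` gives
`f z ≤ (f x₁ + f x₂)/2 - α/8 ‖A x₁ - A x₂‖²`, since the linear term `⟪b, ·⟫` is affine.
Minimality of `x₁` and `x₂` forces the defect to vanish, so `A x₁ = A x₂`; then `f x₁ = f x₂`
leaves `⟪b, x₁⟫ = ⟪b, x₂⟫`. -/

section StrongConvexity

variable {E F : Type*} [NormedAddCommGroup E] [InnerProductSpace ℝ E]
  [NormedAddCommGroup F] [InnerProductSpace ℝ F]

theorem two_mul_apply_midpoint_add_sq_norm_sub_le {g : F → ℝ} {g' : F → F} {α : ℝ}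
    (hstrong : ∀ x y, g x + ⟪g' x, y - x⟫ + α / 2 * ‖y - x‖ ^ 2 ≤ g y) (u v : F) :
    2 * g (midpoint ℝ u v) + α / 4 * ‖u - v‖ ^ 2 ≤ g u + g v := by
  set w := midpoint ℝ u v
  have hvw : v - w = -(u - w) := by
    rw [right_sub_midpoint, left_sub_midpoint, ← smul_neg, neg_sub]
  have hnorm : ‖u - w‖ ^ 2 = ‖u - v‖ ^ 2 / 4 := by
    rw [← dist_eq_norm, dist_left_midpoint, dist_eq_norm, Real.norm_two]
    ring
  have hu := hstrong w u
  have hv := hstrong w v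
  rw [hvw, inner_neg_right, norm_neg, hnorm] at hv
  rw [hnorm] at hu
  linarith

theorem map_eq_of_isMinOn_comp_add_inner {g : F → ℝ} {g' : F → F} {α : ℝ} (hα : 0 < α)
    (hstrong : ∀ x y, g x + ⟪g' x, y - x⟫ + α / 2 * ‖y - x‖ ^ 2 ≤ g y)
    (A : E →L[ℝ] F) (b : E) {P : Set E} (hP : Convex ℝ P) {x₁ x₂ : E}
    (hx₁ : x₁ ∈ P) (hx₂ : x₂ ∈ P) (h₁ : IsMinOn (fun x ↦ g (A x) + ⟪b, x⟫) P x₁)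
    (h₂ : IsMinOn (fun x ↦ g (A x) + ⟪b, x⟫) P x₂) : A x₁ = A x₂ := by
  set z := midpoint ℝ x₁ x₂
  have hz : z ∈ P := hP.midpoint_mem hx₁ hx₂
  have hAz : A z = midpoint ℝ (A x₁) (A x₂) := by
    simp only [z, midpoint_eq_smul_add, map_smul, map_add]
  have hbz : ⟪b, z⟫ = (⟪b, x₁⟫ + ⟪b, x₂⟫) / 2 := by
    simp only [z, midpoint_eq_smul_add, inner_smul_right, inner_add_right, invOf_eq_inv]
    ring
  have hmid := two_mul_apply_midpoint_add_sq_norm_sub_le hstrong (A x₁) (A x₂)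
  have hz₁ : g (A x₁) + ⟪b, x₁⟫ ≤ g (A z) + ⟪b, z⟫ := h₁ hz
  have hz₂ : g (A x₂) + ⟪b, x₂⟫ ≤ g (A z) + ⟪b, z⟫ := h₂ hz
  rw [hAz] at hz₁ hz₂
  have hsq : ‖A x₁ - A x₂‖ ^ 2 ≤ 0 := by nlinarith
  rw [← sub_eq_zero, ← norm_eq_zero]
  exact pow_eq_zero_iff two_ne_zero |>.mp (le_antisymm hsq (sq_nonneg _))

end StrongConvexity

theorem stmt18_general {d m : ℕ}
    (P : Set (EuclideanSpace ℝ (Fin d)))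
    (hPconv : Convex ℝ P)
    (g : EuclideanSpace ℝ (Fin m) → ℝ)
    (gg : EuclideanSpace ℝ (Fin m) → EuclideanSpace ℝ (Fin m))
    (αg : ℝ) (hαg : 0 < αg)
    (hstrong : ∀ x y : EuclideanSpace ℝ (Fin m),
      g x + ⟪gg x, y - x⟫ + αg / 2 * ‖y - x‖ ^ 2 ≤ g y)
    (A : EuclideanSpace ℝ (Fin d) →L[ℝ] EuclideanSpace ℝ (Fin m))
    (b : EuclideanSpace ℝ (Fin d))
    (f : EuclideanSpace ℝ (Fin d) → ℝ)
    (hf : ∀ x, f x = g (A x) + ⟪b, x⟫) :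
    ∀ x₁ ∈ P, ∀ x₂ ∈ P,
      (∀ y ∈ P, f x₁ ≤ f y) → (∀ y ∈ P, f x₂ ≤ f y) →
      A x₁ = A x₂ ∧ ⟪b, x₁⟫ = ⟪b, x₂⟫ := by
  intro x₁ hx₁ x₂ hx₂ h₁ h₂
  obtain rfl : f = fun x ↦ g (A x) + ⟪b, x⟫ := funext hf
  have hA : A x₁ = A x₂ :=
    map_eq_of_isMinOn_comp_add_inner hαg hstrong A b hPconv hx₁ hx₂ h₁ h₂
  have hf_eq : g (A x₁) + ⟪b, x₁⟫ = g (A x₂) + ⟪b, x₂⟫ := le_antisymm (h₁ x₂ hx₂) (h₂ x₁ hx₁)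
  rw [hA] at hf_eq
  exact ⟨hA, add_left_cancel hf_eq⟩

/-- For `g : ℝ^m → ℝ` `α_g`-strongly convex (in the gradient
sense), `A` linear, `b ∈ ℝ^d`, and `f x = g(Ax) + bᵀx` on a convex compact
polytope `P`: any two minimizers `x₁*, x₂*` of `f` over `P` satisfy
`Ax₁* = Ax₂*` and `bᵀx₁* = bᵀx₂*`. -/
theorem stmt18 {d m : ℕ}
    (P : Set (EuclideanSpace ℝ (Fin d)))
    (hPconv : Convex ℝ P) (hPcomp : IsCompact P)
    (g : EuclideanSpace ℝ (Fin m) → ℝ)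
    (gg : EuclideanSpace ℝ (Fin m) → EuclideanSpace ℝ (Fin m))
    (hg : ∀ x, HasGradientAt g (gg x) x)
    (αg : ℝ) (hαg : 0 < αg)
    (hstrong : ∀ x y : EuclideanSpace ℝ (Fin m),
      g x + ⟪gg x, y - x⟫ + αg / 2 * ‖y - x‖ ^ 2 ≤ g y)
    (A : EuclideanSpace ℝ (Fin d) →L[ℝ] EuclideanSpace ℝ (Fin m))
    (b : EuclideanSpace ℝ (Fin d))
    (f : EuclideanSpace ℝ (Fin d) → ℝ)
    (hf : ∀ x, f x = g (A x) + ⟪b, x⟫) :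
    ∀ x₁ ∈ P, ∀ x₂ ∈ P,
      (∀ y ∈ P, f x₁ ≤ f y) → (∀ y ∈ P, f x₂ ≤ f y) →
      A x₁ = A x₂ ∧ ⟪b, x₁⟫ = ⟪b, x₂⟫ :=
  stmt18_general P hPconv g gg αg hαg hstrong A b f hf
end
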